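/- For a partial applicative structure R the following are equivalent: (i) R is posetal, i.e. for every set I the relation ⊢_I on functions I → P(R) is a partial order (reflexive, transitive and antisymmetric); (ii) R is reflexive and transitive and the relation ⊢ on P(R) is antisymmetric; (iii) R is reflexive and transitive and satisfies TL and 1W. -/

import Mathlib

/-- Application lifted to partially-defined arguments: `oapp op x y` is the
value of the applicative term `x · y`, where `x`, `y` may be undefined. -/
def oapp {R : Type} (op : R → R → Option R) (x y : Option R) : Option R :=
  x.bind fun a => y.bind fun b => op a b

/-- The indexed entailment relation `φ ⊢_I ψ` on `P(R)^I` induced by a PAS. -/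
def Entails {R : Type} (op : R → R → Option R) {I : Type} (φ ψ : I → Set R) : Prop :=
  ∃ r : R, ∀ i : I, ∀ a ∈ φ i, ∃ b : R, op r a = some b ∧ b ∈ ψ i

/-- The entailment relation `A ⊢ B` on `P(R)` induced by a PAS. -/
def Entails1 {R : Type} (op : R → R → Option R) (A B : Set R) : Prop :=
  ∃ r : R, ∀ a ∈ A, ∃ b : R, op r a = some b ∧ b ∈ B

/-- `piter f n a` is the `n`-th iterate `f^n(a)` of the partial function `f` at `a`. -/
def piter {R : Type} (f : R → Option R) : ℕ → R → Option R
  | 0 => fun a => some a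
  | n + 1 => fun a => (piter f n a).bind f

/-- A partial function is TO if every point has finite odd order or finite divergence. -/
def TOfun {R : Type} (f : R → Option R) : Prop :=
  ∀ a : R,
    (∃ n : ℕ, (1 ≤ n ∧ piter f n a = some a ∧
        ∀ m : ℕ, 1 ≤ m → piter f m a = some a → n ≤ m) ∧ Odd n) ∨
    (∃ n : ℕ, 1 ≤ n ∧ piter f n a = none)

/-- A partial function is TL if every point is a fixed point or has finite divergence. -/
def TLfun {R : Type} (f : R → Option R) : Prop :=
  ∀ a : R, f a = some a ∨ (∃ n : ℕ, 1 ≤ n ∧ piter f n a = none)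

section

variable {R : Type} {op : R → R → Option R}

def EntailsRefl (op : R → R → Option R) : Prop :=
  ∀ (I : Type) (φ : I → Set R), Entails op φ φ

def EntailsTrans (op : R → R → Option R) : Prop :=
  ∀ (I : Type) (φ ψ ρ : I → Set R), Entails op φ ψ → Entails op ψ ρ → Entails op φ ρ

def Property1W (op : R → R → Option R) : Prop :=
  ∀ r s a b : R, op r a = some b → op s b = some a → a = b

lemma entails_const_iff (A B : Set R) :
    Entails op (fun _ : Unit => A) (fun _ => B) ↔ Entails1 op A B :=
  ⟨fun ⟨r, hr⟩ => ⟨r, hr ()⟩, fun ⟨r, hr⟩ => ⟨r, fun _ => hr⟩⟩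

lemma entails1_singleton {r a b : R} (h : op r a = some b) : Entails1 op {a} {b} :=
  ⟨r, by rintro x rfl; exact ⟨b, h, rfl⟩⟩

lemma piter_succ' (f : R → Option R) (n : ℕ) (a : R) :
    piter f (n + 1) a = (f a).bind (piter f n) := by
  induction n with
  | zero => simp [piter]
  | succ n ih => simp only [piter] at ih ⊢; rw [ih, Option.bind_assoc]

/-- Reflexivity at `I = R`, `φ x = {x}`, yields a realizer of the identity. -/
lemma EntailsRefl.exists_id (hrefl : EntailsRefl op) : ∃ e : R, ∀ a : R, op e a = some a := by
  obtain ⟨e, he⟩ := hrefl R (fun x => {x})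
  refine ⟨e, fun a => ?_⟩
  obtain ⟨b, hb, rfl⟩ := he a a rfl
  exact hb

/-- Transitivity at `I = graph of [s] ∘ [r]`, `φ (a, b, c) = {a}`, `{b}`, `{c}`, yields a
realizer of the composite. -/
lemma EntailsTrans.exists_comp (htrans : EntailsTrans op) (r s : R) :
    ∃ t : R, ∀ a b c : R, op r a = some b → op s b = some c → op t a = some c := by
  let I := {p : R × R × R // op r p.1 = some p.2.1 ∧ op s p.2.1 = some p.2.2}
  have hr : Entails op (fun p : I => ({p.val.1} : Set R)) (fun p => {p.val.2.1}) :=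
    ⟨r, by rintro p a rfl; exact ⟨p.val.2.1, p.property.1, rfl⟩⟩
  have hs : Entails op (fun p : I => ({p.val.2.1} : Set R)) (fun p => {p.val.2.2}) :=
    ⟨s, by rintro p a rfl; exact ⟨p.val.2.2, p.property.2, rfl⟩⟩
  obtain ⟨t, ht⟩ := htrans I _ _ _ hr hs
  refine ⟨t, fun a b c hab hbc => ?_⟩
  obtain ⟨d, hd, rfl⟩ := ht ⟨(a, b, c), hab, hbc⟩ a rfl
  exact hd

lemma exists_piter_realizer (hrefl : EntailsRefl op) (htrans : EntailsTrans op) (r : R) (n : ℕ) :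
    ∃ t : R, ∀ a b : R, piter (op r) n a = some b → op t a = some b := by
  induction n with
  | zero =>
    obtain ⟨e, he⟩ := hrefl.exists_id
    exact ⟨e, fun a b hab => by cases hab; exact he a⟩
  | succ n ih =>
    obtain ⟨t, ht⟩ := ih
    obtain ⟨t', ht'⟩ := htrans.exists_comp t r
    refine ⟨t', fun a c hac => ?_⟩
    obtain ⟨b, hab, hbc⟩ := Option.bind_eq_some_iff.mp hac
    exact ht' a b c (ht a b hab) hbc

lemma property1W_of_antisymm (hanti : ∀ A B : Set R, Entails1 op A B → Entails1 op B A → A = B) :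
    Property1W op := fun _ _ _ _ hab hba =>
  Set.singleton_eq_singleton_iff.mp (hanti _ _ (entails1_singleton hab) (entails1_singleton hba))

/-- If the orbit `A = {f^n a | n ≥ 0}` of `a` under `f = [r]` is everywhere defined, then
`[r]` maps it into `B = {f^n a | n ≥ 1}` and the identity maps `B` into `A`, so `A = B` and `a` is
periodic: `f^(p+1) a = a`. A realizer of `f^p` then sends `f a` back to `a`, and 1W makes `a` a
fixed point. -/
lemma tlfun_of_antisymm (hrefl : EntailsRefl op) (htrans : EntailsTrans op)
    (hanti : ∀ A B : Set R, Entails1 op A B → Entails1 op B A → A = B) (r : R) :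
    TLfun (op r) := by
  intro a
  by_contra! h
  obtain ⟨hnfix, hdiv⟩ := h
  have hdef : ∀ n, ∃ x, piter (op r) n a = some x
    | 0 => ⟨a, rfl⟩
    | n + 1 => Option.ne_none_iff_exists'.mp (hdiv (n + 1) le_add_self)
  let A : Set R := {x | ∃ n, piter (op r) n a = some x}
  let B : Set R := {x | ∃ n, piter (op r) (n + 1) a = some x}
  have hAB : Entails1 op A B := ⟨r, by
    rintro x ⟨n, hn⟩
    obtain ⟨y, hy⟩ := hdef (n + 1)
    refine ⟨y, ?_, n, hy⟩
    simpa only [piter, hn, Option.bind_some] using hy⟩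
  obtain ⟨e, he⟩ := hrefl.exists_id
  have hBA : Entails1 op B A := ⟨e, fun x ⟨n, hn⟩ => ⟨x, he x, n + 1, hn⟩⟩
  obtain ⟨p, hp⟩ : a ∈ B := hanti A B hAB hBA ▸ ⟨0, rfl⟩
  rw [piter_succ'] at hp
  obtain ⟨b, hab, hba⟩ := Option.bind_eq_some_iff.mp hp
  obtain ⟨t, ht⟩ := exists_piter_realizer hrefl htrans r p
  obtain rfl := property1W_of_antisymm hanti r t a b hab (ht b a hba)
  exact hnfix hab

/-- A realizer `t` of `[s] ∘ [r]` maps each `φ i` into itself, so its orbits there never diverge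
and TL makes every `a ∈ φ i` a fixed point of `[t]`; then `r · a = b`, `s · b = a` and 1W give
`a = b ∈ ψ i`. -/
lemma subset_of_entails_of_entails (htrans : EntailsTrans op) (hTL : ∀ r, TLfun (op r))
    (h1W : Property1W op) {I : Type} {φ ψ : I → Set R}
    (hφψ : Entails op φ ψ) (hψφ : Entails op ψ φ) (i : I) : φ i ⊆ ψ i := by
  obtain ⟨r, hr⟩ := hφψ
  obtain ⟨s, hs⟩ := hψφ
  obtain ⟨t, ht⟩ := htrans.exists_comp r s
  intro a ha
  have horbit : ∀ n, ∃ x ∈ φ i, piter (op t) n a = some x := by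
    intro n
    induction n with
    | zero => exact ⟨a, ha, rfl⟩
    | succ n ih =>
      obtain ⟨x, hx, hxn⟩ := ih
      obtain ⟨b, hb, hbψ⟩ := hr i x hx
      obtain ⟨c, hc, hcφ⟩ := hs i b hbψ
      exact ⟨c, hcφ, by simp only [piter, hxn, Option.bind_some]; exact ht x b c hb hc⟩
  have hfix : op t a = some a := (hTL t a).resolve_right fun ⟨n, _, hn⟩ => by
    obtain ⟨x, -, hx⟩ := horbit n
    simp [hn] at hx
  obtain ⟨b, hb, hbψ⟩ := hr i a ha
  obtain ⟨c, hc, -⟩ := hs i b hbψ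
  obtain rfl : a = c := Option.some_injective _ (hfix.symm.trans (ht a b c hb hc))
  exact h1W r s a b hb hc ▸ hbψ

end

theorem stmt_18_general {R : Type} (op : R → R → Option R) :
    [ -- posetal: each ⊢_I is a partial order
      (∀ I : Type,
        (∀ φ : I → Set R, Entails op φ φ) ∧
        (∀ φ ψ ρ : I → Set R, Entails op φ ψ → Entails op ψ ρ → Entails op φ ρ) ∧
        (∀ φ ψ : I → Set R, Entails op φ ψ → Entails op ψ φ → φ = ψ)),
      -- reflexive, transitive and ⊢ antisymmetric
      ((∀ (I : Type) (φ : I → Set R), Entails op φ φ) ∧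
       (∀ (I : Type) (φ ψ ρ : I → Set R),
          Entails op φ ψ → Entails op ψ ρ → Entails op φ ρ) ∧
       (∀ A B : Set R, Entails1 op A B → Entails1 op B A → A = B)),
      -- reflexive, transitive, TL and 1W
      ((∀ (I : Type) (φ : I → Set R), Entails op φ φ) ∧
       (∀ (I : Type) (φ ψ ρ : I → Set R),
          Entails op φ ψ → Entails op ψ ρ → Entails op φ ρ) ∧
       (∀ r : R, TLfun (fun a => op r a)) ∧
       (∀ r s a b : R, op r a = some b → op s b = some a → a = b)) ].TFAE := by
  tfae_have 1 → 2 := fun h =>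
    ⟨fun I => (h I).1, fun I => (h I).2.1, fun A B hAB hBA =>
      congrFun ((h Unit).2.2 _ _ ((entails_const_iff A B).mpr hAB)
        ((entails_const_iff B A).mpr hBA)) ()⟩
  tfae_have 2 → 3 := fun ⟨hrefl, htrans, hanti⟩ =>
    ⟨hrefl, htrans, tlfun_of_antisymm hrefl htrans hanti, property1W_of_antisymm hanti⟩
  tfae_have 3 → 1 := fun ⟨hrefl, htrans, hTL, h1W⟩ I =>
    ⟨hrefl I, htrans I, fun _ _ h h' => funext fun i =>
      (subset_of_entails_of_entails htrans hTL h1W h h' i).antisymm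
        (subset_of_entails_of_entails htrans hTL h1W h' h i)⟩
  tfae_finish

/-- For a PAS, being posetal is equivalent to being reflexive and
transitive with `⊢` antisymmetric, and to being reflexive and transitive
satisfying TL and 1W. -/
theorem stmt_18 {R : Type} [Nonempty R] (op : R → R → Option R) :
    [ -- posetal: each ⊢_I is a partial order
      (∀ I : Type,
        (∀ φ : I → Set R, Entails op φ φ) ∧
        (∀ φ ψ ρ : I → Set R, Entails op φ ψ → Entails op ψ ρ → Entails op φ ρ) ∧
        (∀ φ ψ : I → Set R, Entails op φ ψ → Entails op ψ φ → φ = ψ)),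
      -- reflexive, transitive and ⊢ antisymmetric
      ((∀ (I : Type) (φ : I → Set R), Entails op φ φ) ∧
       (∀ (I : Type) (φ ψ ρ : I → Set R),
          Entails op φ ψ → Entails op ψ ρ → Entails op φ ρ) ∧
       (∀ A B : Set R, Entails1 op A B → Entails1 op B A → A = B)),
      -- reflexive, transitive, TL and 1W
      ((∀ (I : Type) (φ : I → Set R), Entails op φ φ) ∧
       (∀ (I : Type) (φ ψ ρ : I → Set R),
          Entails op φ ψ → Entails op ψ ρ → Entails op φ ρ) ∧
       (∀ r : R, TLfun (fun a => op r a)) ∧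
       (∀ r s a b : R, op r a = some b → op s b = some a → a = b)) ].TFAE :=
  stmt_18_general op
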